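/- arXiv:2312.04341 — 4 statements merged into one kernel-verified Lean document; each statement's English description precedes it below -/
import Mathlib

section
/- Let φ be a symmetric bilinear form on ℝ^(n+1). Let u, v, w, x, y, z be vectors in ℝ^(n+1). Consider the six equations: φ(u,x)=0, φ(v,y)=0, φ(w,z)=0, φ(u+v, y+z)=0, φ(v+w, x+y)=0, φ(u+v+w, x+y+z)=0. Then any five of these six equations imply the sixth. -/
/-!
Expanding by bilinearity, `φ (u + v + w) (x + y + z)` is the signed sum
`φ u x - φ v y + φ w z + φ (u + v) (y + z) + φ (v + w) (x + y)`: the six quantities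
satisfy a linear relation whose coefficients are all `±1`, so the vanishing of any
five of them forces the vanishing of the sixth.
-/

theorem eq_zero_of_sum_smul_eq_zero {ι R M : Type*} [Fintype ι] [Ring R] [AddCommGroup M]
    [Module R M] {a : ι → M} {c : ι → R} (hrel : ∑ i, c i • a i = 0) {k : ι}
    (hk : IsUnit (c k)) (h : ∀ j, j ≠ k → a j = 0) : a k = 0 := by
  rw [Finset.sum_eq_single k (fun j _ hj => by rw [h j hj, smul_zero]) (by simp)] at hrel
  exact hk.smul_eq_zero.mp hrel

theorem LinearMap.apply_add_add_add_add_eq {R M N P : Type*} [CommSemiring R]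
    [AddCommMonoid M] [AddCommMonoid N] [AddCommGroup P] [Module R M] [Module R N] [Module R P]
    (B : M →ₗ[R] N →ₗ[R] P) (u v w : M) (x y z : N) :
    B (u + v + w) (x + y + z)
      = B u x - B v y + B w z + B (u + v) (y + z) + B (v + w) (x + y) := by
  simp only [map_add, LinearMap.add_apply]
  abel

theorem stmt0_general (n : ℕ) (φ : LinearMap.BilinForm ℝ (Fin (n + 1) → ℝ))
    (u v w x y z : Fin (n + 1) → ℝ) :
    ∀ k : Fin 6,
      (∀ j : Fin 6, j ≠ k →
        ![φ u x = 0, φ v y = 0, φ w z = 0,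
          φ (u + v) (y + z) = 0, φ (v + w) (x + y) = 0,
          φ (u + v + w) (x + y + z) = 0] j) →
      ![φ u x = 0, φ v y = 0, φ w z = 0,
        φ (u + v) (y + z) = 0, φ (v + w) (x + y) = 0,
        φ (u + v + w) (x + y + z) = 0] k := by
  set a : Fin 6 → ℝ := ![φ u x, φ v y, φ w z, φ (u + v) (y + z), φ (v + w) (x + y),
    φ (u + v + w) (x + y + z)]
  set c : Fin 6 → ℝ := ![1, -1, 1, 1, 1, -1]
  have hrel : ∑ i, c i • a i = 0 := by
    simp only [Fin.sum_univ_six, a, c, Matrix.cons_val_zero, Matrix.cons_val_one, Matrix.cons_val,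
      smul_eq_mul, φ.apply_add_add_add_add_eq]
    ring
  have hprop : ∀ j, ![φ u x = 0, φ v y = 0, φ w z = 0, φ (u + v) (y + z) = 0,
      φ (v + w) (x + y) = 0, φ (u + v + w) (x + y + z) = 0] j = (a j = 0) := by
    intro j; fin_cases j <;> rfl
  intro k h
  simp only [hprop] at h ⊢
  have hk : IsUnit (c k) := by fin_cases k <;> norm_num [c]
  exact eq_zero_of_sum_smul_eq_zero hrel hk h

/-- Any five of the six conjugacy conditions between the vertices and the
Laplace points of two planar quads, relative to a quadric given by a symmetric
bilinear form `φ`, imply the sixth one. -/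
theorem stmt0 (n : ℕ) (φ : LinearMap.BilinForm ℝ (Fin (n + 1) → ℝ))
    (hsymm : ∀ a b, φ a b = φ b a)
    (u v w x y z : Fin (n + 1) → ℝ) :
    ∀ k : Fin 6,
      (∀ j : Fin 6, j ≠ k →
        ![φ u x = 0, φ v y = 0, φ w z = 0,
          φ (u + v) (y + z) = 0, φ (v + w) (x + y) = 0,
          φ (u + v + w) (x + y + z) = 0] j) →
      ![φ u x = 0, φ v y = 0, φ w z = 0,
        φ (u + v) (y + z) = 0, φ (v + w) (x + y) = 0,
        φ (u + v + w) (x + y + z) = 0] k :=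
  stmt0_general n φ u v w x y z
end

section
/- Let φ be a symmetric bilinear form on a real vector space V. Let O₁₂=[u], O₁₁=[v], O₂₁=[w], O₂₂=[u+v+w] and P₁₂=[x], P₁₁=[y], P₂₁=[z], P₂₂=[x+y+z] be the vertices of two planar quads with Laplace points [v+w], [u+v] and [y+z], [x+y] respectively. If φ(u,x)=0, φ(v,y)=0, φ(w,z)=0, φ(u+v,y+z)=0, and φ(v+w,x+y)=0, then φ(u+v+w, x+y+z)=0. -/
/-- Both sides expand to the nine pairings `f a b`, `a ∈ {u, v, w}`, `b ∈ {x, y, z}`,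
with `f v y` counted twice. -/
theorem LinearMap.six_conditions_identity {R M N P : Type*} [CommSemiring R]
    [AddCommMonoid M] [AddCommMonoid N] [AddCommMonoid P]
    [Module R M] [Module R N] [Module R P] (f : M →ₗ[R] N →ₗ[R] P) (u v w : M) (x y z : N) :
    f (u + v + w) (x + y + z) + f v y =
      f u x + f w z + f (u + v) (y + z) + f (v + w) (x + y) := by
  simp only [map_add, LinearMap.add_apply]
  abel

theorem stmt9_general (V : Type*) [AddCommGroup V] [Module ℝ V]
    (φ : LinearMap.BilinForm ℝ V)
    (u v w x y z : V)
    (h1 : φ u x = 0) (h2 : φ v y = 0) (h3 : φ w z = 0)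
    (h4 : φ (u + v) (y + z) = 0) (h5 : φ (v + w) (x + y) = 0) :
    φ (u + v + w) (x + y + z) = 0 := by
  simpa only [h1, h2, h3, h4, h5, add_zero] using φ.six_conditions_identity u v w x y z

/-- One instance of the six-conditions lemma: five conjugacy conditions between
the vertices and Laplace points of two planar quads imply the sixth one,
`φ(u+v+w, x+y+z) = 0`. -/
theorem stmt9 (V : Type*) [AddCommGroup V] [Module ℝ V]
    (φ : LinearMap.BilinForm ℝ V)
    (hsymm : ∀ a b, φ a b = φ b a)
    (u v w x y z : V)
    (h1 : φ u x = 0) (h2 : φ v y = 0) (h3 : φ w z = 0)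
    (h4 : φ (u + v) (y + z) = 0) (h5 : φ (v + w) (x + y) = 0) :
    φ (u + v + w) (x + y + z) = 0 :=
  stmt9_general V φ u v w x y z h1 h2 h3 h4 h5
end

section
/- Let P : ℤ × [2] → ℝ² be a circular net (each quad P(i,1), P(i+1,1), P(i+1,2), P(i,2) is concyclic) such that for j = 1, 2 the points {P(i,j) : i ∈ ℤ} lie on a line H_j. Let V_i denote the line through P(i,1) and P(i,2). Then all lines V_{2i} (even index) are mutually parallel, and all lines V_{2i+1} (odd index) are mutually parallel. -/
/-! Parametrize the lines as `H₁ = {a • u + p}` and `H₂ = {b • v + q}`; for a line meeting the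
circle through the `i`-th quad in the parameters `s ≠ t`, Vieta's formulas for the quadratic
`‖s • u + p - c‖² = r²` give `s + t` and `s * t` (the latter is the power of `p`).

If `H₁` and `H₂` meet at `O`, take `p = q = O`: the power of `O` with respect to the `i`-th circle
gives `aᵢ aᵢ₊₁ ‖u‖² = bᵢ bᵢ₊₁ ‖v‖²`, so `(aᵢ₊₂, bᵢ₊₂)` is proportional to `(aᵢ, bᵢ)` and
`V_{i+2}` is the image of `V_i` under a homothety centred at `O`.
If `H₁ ∥ H₂`, the two chords of each circle have a common perpendicular bisector, which forces
`P(i+2,1) - P(i+2,0) = P(i,1) - P(i,0)`. -/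

open EuclideanGeometry Module
open scoped RealInnerProductSpace

def IsCircularNet {X : Type*} [MetricSpace X] (P : ℤ → Fin 2 → X) : Prop :=
  ∀ i, Cospherical ({P i 0, P (i + 1) 0, P (i + 1) 1, P i 1} : Set X)

theorem IsCircularNet.exists_sphere {X : Type*} [MetricSpace X] {P : ℤ → Fin 2 → X}
    (hP : IsCircularNet P) (i : ℤ) :
    ∃ S : Sphere X, P i 0 ∈ S ∧ P (i + 1) 0 ∈ S ∧ P i 1 ∈ S ∧ P (i + 1) 1 ∈ S := by
  obtain ⟨S, hS⟩ := cospherical_iff_exists_sphere.1 (hP i)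
  exact ⟨S, hS (by simp), hS (by simp), hS (by simp), hS (by simp)⟩

variable {V : Type*} [NormedAddCommGroup V] [InnerProductSpace ℝ V]

theorem dist_smul_add_sq (s : ℝ) (u p c : V) :
    dist (s • u + p) c ^ 2 = s ^ 2 * ‖u‖ ^ 2 + 2 * s * ⟪u, p - c⟫ + dist p c ^ 2 := by
  rw [dist_eq_norm, dist_eq_norm, add_sub_assoc, norm_add_sq_real, norm_smul, real_inner_smul_left,
    mul_pow, Real.norm_eq_abs, sq_abs]
  ring

namespace EuclideanGeometry.Sphere

variable {S : Sphere V} {u p : V} {s t : ℝ}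

theorem add_mul_norm_sq_eq_two_inner (hs : s • u + p ∈ S) (ht : t • u + p ∈ S) (hst : s ≠ t) :
    (s + t) * ‖u‖ ^ 2 = 2 * ⟪u, S.center - p⟫ := by
  have hs' := dist_smul_add_sq s u p S.center
  have ht' := dist_smul_add_sq t u p S.center
  rw [mem_sphere.1 hs] at hs'
  rw [mem_sphere.1 ht] at ht'
  rw [← neg_sub p, inner_neg_right]
  apply mul_left_cancel₀ (sub_ne_zero.2 hst)
  linear_combination ht' - hs'

theorem mul_mul_norm_sq_eq_power (hs : s • u + p ∈ S) (ht : t • u + p ∈ S) (hst : s ≠ t) :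
    s * t * ‖u‖ ^ 2 = S.power p := by
  have hs' := dist_smul_add_sq s u p S.center
  have ht' := dist_smul_add_sq t u p S.center
  rw [mem_sphere.1 hs] at hs'
  rw [mem_sphere.1 ht] at ht'
  apply mul_left_cancel₀ (sub_ne_zero.2 hst)
  rw [power]
  linear_combination s * ht' - t * hs'

end EuclideanGeometry.Sphere

theorem exists_eq_smul_or_exists_smul_add_eq (h2 : finrank ℝ V = 2) {u : V} (hu : u ≠ 0)
    (v p q : V) : (∃ μ : ℝ, v = μ • u) ∨ ∃ α β : ℝ, α • u + p = β • v + q := by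
  refine or_iff_not_imp_left.2 fun hvu => ?_
  have hli : LinearIndependent ℝ ![u, v] :=
    (LinearIndependent.pair_iff' hu).2 fun μ h => hvu ⟨μ, h.symm⟩
  have hspan : Submodule.span ℝ {v, u} = ⊤ := by
    simpa using hli.span_eq_top_of_card_eq_finrank (by simp [h2])
  obtain ⟨β, α, h⟩ := Submodule.mem_span_pair.1 (hspan ▸ Submodule.mem_top : q - p ∈ _)
  exact ⟨α, -β, by linear_combination (norm := module) h⟩

theorem span_singleton_sub_eq_of_mul_eq_mul {K M : Type*} [Field K] [AddCommGroup M] [Module K M]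
    {u v : M} {a b a' b' : K} (h : a * b' = a' * b) (hw : b • v - a • u ≠ 0)
    (hw' : b' • v - a' • u ≠ 0) : K ∙ (b' • v - a' • u) = K ∙ (b • v - a • u) := by
  obtain ⟨k, hk⟩ : ∃ k : K, b' • v - a' • u = k • (b • v - a • u) := by
    by_cases hb : b = 0
    · have ha : a ≠ 0 := fun ha => hw (by simp [ha, hb])
      have hb' : b' = 0 := by simpa [hb, ha] using h
      refine ⟨a' / a, ?_⟩
      rw [hb, hb', zero_smul, zero_sub, zero_sub, smul_neg, smul_smul,
        div_mul_cancel₀ a' ha]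
    · refine ⟨b' / b, ?_⟩
      rw [smul_sub, smul_smul, smul_smul, div_mul_cancel₀ b' hb, div_mul_eq_mul_div, mul_comm b',
        h, mul_div_cancel_right₀ a' hb]
  have hk0 : k ≠ 0 := fun hk0 => hw' (by rw [hk, hk0, zero_smul])
  rw [hk, Submodule.span_singleton_smul_eq (IsUnit.mk0 k hk0)]

namespace IsCircularNet

variable {P : ℤ → Fin 2 → V} {a b : ℤ → ℝ}

theorem sub_mul_norm_sq_eq_two_inner (hP : IsCircularNet P) {p q u : V}
    (ha : ∀ i, P i 0 = a i • u + p) (hb : ∀ i, P i 1 = b i • u + q)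
    (hH : ∀ i j, P i j ≠ P (i + 1) j) (i : ℤ) :
    (a i + a (i + 1) - (b i + b (i + 1))) * ‖u‖ ^ 2 = 2 * ⟪u, q - p⟫ := by
  obtain ⟨S, hp, hp', hq, hq'⟩ := hP.exists_sphere i
  rw [ha] at hp hp'
  rw [hb] at hq hq'
  have hsum_a := S.add_mul_norm_sq_eq_two_inner hp hp' fun h => hH i 0 (by rw [ha, ha, h])
  have hsum_b := S.add_mul_norm_sq_eq_two_inner hq hq' fun h => hH i 1 (by rw [hb, hb, h])
  rw [inner_sub_right] at hsum_a hsum_b ⊢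
  linear_combination hsum_a - hsum_b

theorem vectorSpan_add_two_eq_of_parallel (hP : IsCircularNet P) {p q u : V}
    (ha : ∀ i, P i 0 = a i • u + p) (hb : ∀ i, P i 1 = b i • u + q)
    (hH : ∀ i j, P i j ≠ P (i + 1) j) (i : ℤ) :
    vectorSpan ℝ {P (i + 2) 0, P (i + 2) 1} = vectorSpan ℝ {P i 0, P i 1} := by
  have h₀ := hP.sub_mul_norm_sq_eq_two_inner ha hb hH i
  have h₁ := hP.sub_mul_norm_sq_eq_two_inner ha hb hH (i + 1)
  rw [add_assoc, one_add_one_eq_two] at h₁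
  have hshift : (b (i + 2) - a (i + 2) - (b i - a i)) • u = 0 := by
    have : (b (i + 2) - a (i + 2) - (b i - a i)) * ‖u‖ ^ 2 = 0 := by
      linear_combination h₀ - h₁
    simpa using this
  rw [vectorSpan_pair_rev, vectorSpan_pair_rev, vsub_eq_sub, vsub_eq_sub, ha, ha, hb, hb]
  congr 2
  linear_combination (norm := module) hshift

theorem mul_mul_norm_sq_eq (hP : IsCircularNet P) {O u v : V}
    (ha : ∀ i, P i 0 = a i • u + O) (hb : ∀ i, P i 1 = b i • v + O)
    (hH : ∀ i j, P i j ≠ P (i + 1) j) (i : ℤ) :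
    a i * a (i + 1) * ‖u‖ ^ 2 = b i * b (i + 1) * ‖v‖ ^ 2 := by
  obtain ⟨S, hp, hp', hq, hq'⟩ := hP.exists_sphere i
  rw [ha] at hp hp'
  rw [hb] at hq hq'
  rw [S.mul_mul_norm_sq_eq_power hp hp' fun h => hH i 0 (by rw [ha, ha, h]),
    S.mul_mul_norm_sq_eq_power hq hq' fun h => hH i 1 (by rw [hb, hb, h])]

theorem vectorSpan_add_two_eq_of_meet (hP : IsCircularNet P) {O u v : V}
    (ha : ∀ i, P i 0 = a i • u + O) (hb : ∀ i, P i 1 = b i • v + O)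
    (hV : ∀ i, P i 0 ≠ P i 1) (hH : ∀ i j, P i j ≠ P (i + 1) j) (i : ℤ) :
    vectorSpan ℝ {P (i + 2) 0, P (i + 2) 1} = vectorSpan ℝ {P i 0, P i 1} := by
  have hu : u ≠ 0 := fun h => hH i 0 (by rw [ha, ha, h, smul_zero, smul_zero])
  have hv : v ≠ 0 := fun h => hH i 1 (by rw [hb, hb, h, smul_zero, smul_zero])
  have h₀ := hP.mul_mul_norm_sq_eq ha hb hH i
  have h₁ := hP.mul_mul_norm_sq_eq ha hb hH (i + 1)
  rw [add_assoc, one_add_one_eq_two] at h₁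
  have hcross : a i * b (i + 2) = a (i + 2) * b i := by
    -- if `P (i + 1) 0 = O`, the power of `O` vanishes and forces `P i 1 = P (i + 2) 1 = O`
    by_cases ha₁ : a (i + 1) = 0
    · have hb₁ : b (i + 1) ≠ 0 := fun hb₁ =>
        hV (i + 1) (by rw [ha, hb, ha₁, hb₁, zero_smul, zero_smul])
      have hb₀ : b i = 0 := by simpa [ha₁, hb₁, hv] using h₀.symm
      have hb₂ : b (i + 2) = 0 := by simpa [ha₁, hb₁, hv] using h₁.symm
      rw [hb₀, hb₂, mul_zero, mul_zero]
    · apply mul_left_cancel₀ (mul_ne_zero ha₁ (pow_ne_zero 2 (norm_ne_zero_iff.2 hu)))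
      linear_combination b (i + 2) * h₀ - b i * h₁
  have hw : ∀ k, b k • v - a k • u ≠ 0 := fun k => by
    rw [← add_sub_add_right_eq_sub _ _ O, ← ha, ← hb]
    exact sub_ne_zero.2 (hV k).symm
  rw [vectorSpan_pair_rev, vectorSpan_pair_rev, vsub_eq_sub, vsub_eq_sub, ha, ha, hb, hb,
    add_sub_add_right_eq_sub, add_sub_add_right_eq_sub]
  exact span_singleton_sub_eq_of_mul_eq_mul hcross (hw i) (hw (i + 2))

theorem periodic_vectorSpan (h2 : finrank ℝ V = 2) (hP : IsCircularNet P)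
    (hcol : ∀ j, Collinear ℝ {x | ∃ i, x = P i j}) (hV : ∀ i, P i 0 ≠ P i 1)
    (hH : ∀ i j, P i j ≠ P (i + 1) j) :
    Function.Periodic (fun i => vectorSpan ℝ ({P i 0, P i 1} : Set V)) 2 := by
  obtain ⟨p, u, hu⟩ := collinear_iff_exists_forall_eq_smul_vadd _ |>.1 (hcol 0)
  obtain ⟨q, v, hv⟩ := collinear_iff_exists_forall_eq_smul_vadd _ |>.1 (hcol 1)
  choose a ha using fun i => hu (P i 0) ⟨i, rfl⟩
  choose b hb using fun i => hv (P i 1) ⟨i, rfl⟩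
  simp only [vadd_eq_add] at ha hb
  have hu₀ : u ≠ 0 := fun h => hH 0 0 (by rw [ha, ha, h, smul_zero, smul_zero])
  intro i
  rcases exists_eq_smul_or_exists_smul_add_eq h2 hu₀ v p q with ⟨μ, rfl⟩ | ⟨α, β, hO⟩
  · exact hP.vectorSpan_add_two_eq_of_parallel ha (fun i => by rw [hb, smul_smul]) hH i
  · have ha' : ∀ i, P i 0 = (a i - α) • u + (α • u + p) := fun i => by rw [ha]; module
    have hb' : ∀ i, P i 1 = (b i - β) • v + (α • u + p) := fun i => by rw [hb, hO]; module
    exact hP.vectorSpan_add_two_eq_of_meet ha' hb' hV hH i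

end IsCircularNet

/-- Alternating parallelism for a circular net `P : ℤ × [2] → ℝ²` whose two
parameter lines `{P(i,j) : i ∈ ℤ}` (j = 1, 2) are contained in lines: the
transversal lines `V_i = P(i,1) ∨ P(i,2)` with even index are mutually
parallel, and those with odd index are mutually parallel. -/
theorem stmt12 (P : ℤ → Fin 2 → EuclideanSpace ℝ (Fin 2))
    -- the two parameter lines are contained in lines H₁, H₂
    (hcol : ∀ j : Fin 2, Collinear ℝ {x | ∃ i : ℤ, x = P i j})
    -- circular net: each elementary quad is concyclic
    (hcirc : ∀ i : ℤ, EuclideanGeometry.Cospherical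
      ({P i 0, P (i + 1) 0, P (i + 1) 1, P i 1} : Set (EuclideanSpace ℝ (Fin 2))))
    -- genericity: the two points on each transversal line are distinct,
    -- and consecutive points along each parameter line are distinct
    (hV : ∀ i : ℤ, P i 0 ≠ P i 1)
    (hH : ∀ (i : ℤ) (j : Fin 2), P i j ≠ P (i + 1) j) :
    (∀ i k : ℤ, (affineSpan ℝ ({P (2 * i) 0, P (2 * i) 1} : Set (EuclideanSpace ℝ (Fin 2)))).Parallel
      (affineSpan ℝ {P (2 * k) 0, P (2 * k) 1})) ∧
    (∀ i k : ℤ, (affineSpan ℝ ({P (2 * i + 1) 0, P (2 * i + 1) 1} : Set (EuclideanSpace ℝ (Fin 2)))).Parallel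
      (affineSpan ℝ {P (2 * k + 1) 0, P (2 * k + 1) 1})) := by
  have hper := IsCircularNet.periodic_vectorSpan finrank_euclideanSpace_fin hcirc hcol hV hH
  simp only [AffineSubspace.affineSpan_pair_parallel_iff_vectorSpan_eq]
  refine ⟨fun i k => ?_, fun i k => ?_⟩
  · rw [mul_comm 2 i, mul_comm 2 k]
    exact (hper.int_mul_eq i).trans (hper.int_mul_eq k).symm
  · rw [mul_comm 2 i, mul_comm 2 k, add_comm _ 1, add_comm _ 1]
    exact (hper.int_mul i 1).trans (hper.int_mul k 1).symm
end

section
/- Let φ₁, φ₂ be quadratic forms on ℝ^(n+1) corresponding to distinct quadrics, and let F_U, F_W be two distinct n-dimensional linear subspaces (hyperplanes) of ℝ^(n+1), with F := F_U ∩ F_W of dimension n-1. Let φ_U be a symmetric bilinear form on F_U and φ_W a symmetric bilinear form on F_W such that φ_U and φ_W agree on F × F. Then there exists a symmetric bilinear form φ on ℝ^(n+1) restricting to φ_U on F_U and to φ_W on F_W; moreover the set of such extensions is a one-parameter family (a pencil), and if the restriction of φ_U to F is not identically zero then this pencil of quadrics containing both restricted quadrics is uniquely determined. -/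
/-- `φ` is a symmetric bilinear form on `ℝⁿ⁺¹` restricting to `φU` on the
hyperplane `FU` and to `φW` on the hyperplane `FW`. -/
def IsSymmExtension (n : ℕ) (FU FW : Submodule ℝ (Fin (n + 1) → ℝ))
    (φU : LinearMap.BilinForm ℝ FU) (φW : LinearMap.BilinForm ℝ FW)
    (φ : LinearMap.BilinForm ℝ (Fin (n + 1) → ℝ)) : Prop :=
  (∀ x y, φ x y = φ y x) ∧
  (∀ x y : FU, φ x.1 y.1 = φU x y) ∧
  (∀ x y : FW, φ x.1 y.1 = φW x y)

/-!
Put `V = K u ⊕ K w ⊕ (U ⊓ W)` with `u ∈ U \ W`, `w ∈ W \ U`, and let `α`, `β` be the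
coordinates along `u` and `w`, so that `W = ker α` and `U = ker β`. A symmetric form that
vanishes on `U × U` and on `W × W` then only sees its value at `(u, w)`: it is a multiple of
`α ⊗ β + β ⊗ α`. Hence two symmetric common extensions of `φU` and `φW` differ by such a multiple,
and one extension is given by inclusion–exclusion over the projections onto `U`, `W` and
`U ⊓ W`. The extensions therefore form a line `φ₀ + K δ` with `δ ≠ 0`, and any two
parametrisations of one such line span the same plane.
-/

open Module LinearMap Submodule

variable {K V : Type*} [Field K] [AddCommGroup V] [Module K V]

namespace Submodule

theorem exists_mem_notMem_of_ne_of_finrank_eq [FiniteDimensional K V] {U W : Submodule K V}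
    (hne : U ≠ W) (h : finrank K U = finrank K W) : ∃ u ∈ U, u ∉ W := by
  by_contra! hle
  exact hne (eq_of_le_of_finrank_eq hle h)

theorem exists_dual_ker_eq_of_finrank_add_one [FiniteDimensional K V] {W : Submodule K V}
    (hW : finrank K W + 1 = finrank K V) {x : V} (hx : x ∉ W) :
    ∃ α : V →ₗ[K] K, ker α = W ∧ α x = 1 := by
  obtain ⟨g, hgx, hgW⟩ := W.exists_dual_map_eq_bot_of_notMem hx inferInstance
  have hWg : W ≤ ker g := LinearMap.le_ker_iff_map.mpr hgW
  have hker : ker g = W := by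
    refine (eq_of_le_of_finrank_eq hWg ?_).symm
    have := Module.Dual.finrank_ker_add_one_of_ne_zero (f := g) (by rintro rfl; simp at hgx)
    omega
  refine ⟨(g x)⁻¹ • g, ?_, inv_mul_cancel₀ hgx⟩
  rw [ker_smul _ _ (inv_ne_zero hgx), hker]

theorem span_pair_eq_of_forall_exists_add_smul {a b c d : V} (hd : d ≠ 0)
    (h : ∀ t : K, ∃ s : K, c + t • d = a + s • b) :
    span K {a, b} = span K {c, d} := by
  obtain ⟨s₀, hs₀⟩ := h 0
  obtain ⟨s₁, hs₁⟩ := h 1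
  rw [zero_smul, add_zero] at hs₀
  rw [one_smul] at hs₁
  have hd_eq : d = (s₁ - s₀) • b := by linear_combination (norm := module) hs₁ - hs₀
  have hs : s₁ - s₀ ≠ 0 := fun hs => hd (by rw [hd_eq, hs, zero_smul])
  apply le_antisymm <;> rw [span_le, Set.insert_subset_iff, Set.singleton_subset_iff] <;>
    simp only [SetLike.mem_coe, mem_span_pair]
  · refine ⟨⟨1, -s₀ / (s₁ - s₀), ?_⟩, ⟨0, (s₁ - s₀)⁻¹, ?_⟩⟩
    · rw [hd_eq, hs₀, smul_smul]; field_simp; module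
    · rw [hd_eq, smul_smul, inv_mul_cancel₀ hs]; module
  · exact ⟨⟨1, s₀, by rw [hs₀]; module⟩, ⟨0, s₁ - s₀, by rw [hd_eq]; module⟩⟩

end Submodule

/-- The paper's adapted basis `b₁, …, bₙ₊₁` in coordinate-free form: `u = b₁`, `w = bₙ₊₁`, and
`α`, `β` are the coordinate functionals of `b₁`, `bₙ₊₁`, so `U ⊓ W` plays `span (b₂, …, bₙ)`. -/
structure HyperplanePairFrame (U W : Submodule K V) where
  u : V
  w : V
  α : V →ₗ[K] K
  β : V →ₗ[K] K
  u_mem : u ∈ U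
  w_mem : w ∈ W
  α_u : α u = 1
  β_w : β w = 1
  ker_α : ker α = W
  ker_β : ker β = U

theorem HyperplanePairFrame.nonempty [FiniteDimensional K V] {U W : Submodule K V}
    (hU : finrank K U + 1 = finrank K V) (hW : finrank K W + 1 = finrank K V) (hne : U ≠ W) :
    Nonempty (HyperplanePairFrame U W) := by
  obtain ⟨u, hu, huW⟩ := exists_mem_notMem_of_ne_of_finrank_eq hne (by omega)
  obtain ⟨w, hw, hwU⟩ := exists_mem_notMem_of_ne_of_finrank_eq hne.symm (by omega)
  obtain ⟨α, hα, hαu⟩ := exists_dual_ker_eq_of_finrank_add_one hW huW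
  obtain ⟨β, hβ, hβw⟩ := exists_dual_ker_eq_of_finrank_add_one hU hwU
  exact ⟨⟨u, w, α, β, hu, hw, hαu, hβw, hα, hβ⟩⟩

namespace HyperplanePairFrame

variable {U W : Submodule K V} (f : HyperplanePairFrame U W)

theorem mem_W_iff {x : V} : x ∈ W ↔ f.α x = 0 := by
  rw [← mem_ker (f := f.α), f.ker_α]

theorem mem_U_iff {x : V} : x ∈ U ↔ f.β x = 0 := by
  rw [← mem_ker (f := f.β), f.ker_β]

theorem α_eq_zero {x : V} (hx : x ∈ W) : f.α x = 0 := f.mem_W_iff.mp hx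

theorem β_eq_zero {x : V} (hx : x ∈ U) : f.β x = 0 := f.mem_U_iff.mp hx

def projU : V →ₗ[K] U :=
  (LinearMap.id - f.β.smulRight f.w).codRestrict U fun x => by
    rw [f.mem_U_iff]; simp [f.β_w]

def projW : V →ₗ[K] W :=
  (LinearMap.id - f.α.smulRight f.u).codRestrict W fun x => by
    rw [f.mem_W_iff]; simp [f.α_u]

def projF : V →ₗ[K] ↥(U ⊓ W) :=
  (LinearMap.id - f.α.smulRight f.u - f.β.smulRight f.w).codRestrict (U ⊓ W) fun x => by
    rw [mem_inf, f.mem_U_iff, f.mem_W_iff]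
    simp [f.α_u, f.β_w, f.α_eq_zero f.w_mem, f.β_eq_zero f.u_mem]

@[simp] theorem coe_projU (x : V) : (f.projU x : V) = x - f.β x • f.w := rfl
@[simp] theorem coe_projW (x : V) : (f.projW x : V) = x - f.α x • f.u := rfl
@[simp] theorem coe_projF (x : V) : (f.projF x : V) = x - f.α x • f.u - f.β x • f.w := rfl

theorem projU_eq_self (x : U) : f.projU x = x := by
  ext; simp [f.β_eq_zero x.2]

theorem projW_eq_self (x : W) : f.projW x = x := by
  ext; simp [f.α_eq_zero x.2]

theorem projU_eq_inclusion_projF {x : V} (hx : x ∈ W) :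
    f.projU x = inclusion inf_le_left (f.projF x) := by
  ext; simp [f.α_eq_zero hx]

theorem projW_eq_inclusion_projF {x : V} (hx : x ∈ U) :
    f.projW x = inclusion inf_le_right (f.projF x) := by
  ext; simp [f.β_eq_zero hx]

theorem decomposition (x : V) : x = f.α x • f.u + f.β x • f.w + (f.projF x : V) := by
  simp

def crossForm : LinearMap.BilinForm K V :=
  BilinForm.linMulLin f.α f.β + BilinForm.linMulLin f.β f.α

@[simp] theorem crossForm_apply (x y : V) :
    f.crossForm x y = f.α x * f.β y + f.β x * f.α y := rfl

theorem crossForm_u_w : f.crossForm f.u f.w = 1 := by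
  simp [f.α_u, f.β_w, f.α_eq_zero f.w_mem, f.β_eq_zero f.u_mem]

theorem crossForm_ne_zero : f.crossForm ≠ 0 := fun h => by
  simpa [h] using f.crossForm_u_w

theorem isSymm_crossForm : f.crossForm.IsSymm :=
  ⟨fun x y => by simp only [crossForm_apply]; ring⟩

theorem eq_smul_crossForm {ψ : LinearMap.BilinForm K V} (hψ : ψ.IsSymm)
    (hU : ψ.restrict U = 0) (hW : ψ.restrict W = 0) :
    ψ = ψ f.u f.w • f.crossForm := by
  have hψU : ∀ x ∈ U, ∀ y ∈ U, ψ x y = 0 := fun x hx y hy => congr($hU ⟨x, hx⟩ ⟨y, hy⟩)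
  have hψW : ∀ x ∈ W, ∀ y ∈ W, ψ x y = 0 := fun x hx y hy => congr($hW ⟨x, hx⟩ ⟨y, hy⟩)
  have hu := f.u_mem
  have hw := f.w_mem
  have hwu : ψ f.w f.u = ψ f.u f.w := (hψ.eq _ _).symm
  ext x y
  obtain ⟨hxU, hxW⟩ := (f.projF x).2
  obtain ⟨hyU, hyW⟩ := (f.projF y).2
  conv_lhs => rw [f.decomposition x, f.decomposition y]
  simp only [map_add, map_smul, LinearMap.add_apply, LinearMap.smul_apply, smul_eq_mul,
    crossForm_apply, hwu, hψU _ hu _ hu, hψW _ hw _ hw, hψU _ hu _ hyU, hψU _ hxU _ hu,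
    hψW _ hw _ hyW, hψW _ hxW _ hw, hψU _ hxU _ hyU]
  ring

section Extension

variable {φU : LinearMap.BilinForm K U} {φW : LinearMap.BilinForm K W}

variable (φU φW) in
/-- Inclusion–exclusion: `φU ∘ projU + φW ∘ projW - φ_F ∘ projF`, with `φ_F` the common
restriction to `U ⊓ W`. -/
def symmExtension : LinearMap.BilinForm K V :=
  φU.compl₁₂ f.projU f.projU + φW.compl₁₂ f.projW f.projW -
    φU.compl₁₂ (inclusion inf_le_left ∘ₗ f.projF) (inclusion inf_le_left ∘ₗ f.projF)

theorem symmExtension_apply (x y : V) :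
    f.symmExtension φU φW x y = φU (f.projU x) (f.projU y) + φW (f.projW x) (f.projW y) -
      φU (inclusion inf_le_left (f.projF x)) (inclusion inf_le_left (f.projF y)) := rfl

theorem isSymm_symmExtension (hU : φU.IsSymm) (hW : φW.IsSymm) :
    (f.symmExtension φU φW).IsSymm :=
  ⟨fun x y => by simp only [symmExtension_apply, hU.eq, hW.eq]⟩

variable (hagree : ∀ x y : ↥(U ⊓ W),
  φU (inclusion inf_le_left x) (inclusion inf_le_left y) =
    φW (inclusion inf_le_right x) (inclusion inf_le_right y))
include hagree

theorem restrict_symmExtension_left : (f.symmExtension φU φW).restrict U = φU := by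
  ext x y
  simp [symmExtension_apply, projU_eq_self, projW_eq_inclusion_projF, hagree]

theorem restrict_symmExtension_right : (f.symmExtension φU φW).restrict W = φW := by
  ext x y
  simp [symmExtension_apply, projW_eq_self, projU_eq_inclusion_projF, hagree]

theorem isSymm_and_restrict_iff (hU : φU.IsSymm) (hW : φW.IsSymm)
    (φ : LinearMap.BilinForm K V) :
    φ.IsSymm ∧ φ.restrict U = φU ∧ φ.restrict W = φW ↔
      ∃ t : K, φ = f.symmExtension φU φW + t • f.crossForm := by
  constructor
  · rintro ⟨hφ, hφU, hφW⟩
    have hψU : (φ - f.symmExtension φU φW).restrict U = 0 := by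
      ext x y
      exact sub_eq_zero.mpr <|
        congr($hφU x y).trans congr($(f.restrict_symmExtension_left hagree) x y).symm
    have hψW : (φ - f.symmExtension φU φW).restrict W = 0 := by
      ext x y
      exact sub_eq_zero.mpr <|
        congr($hφW x y).trans congr($(f.restrict_symmExtension_right hagree) x y).symm
    refine ⟨(φ - f.symmExtension φU φW) f.u f.w, ?_⟩
    rw [← f.eq_smul_crossForm (hφ.sub (f.isSymm_symmExtension hU hW)) hψU hψW]
    abel
  · rintro ⟨t, rfl⟩
    refine ⟨(f.isSymm_symmExtension hU hW).add (f.isSymm_crossForm.smul t), ?_, ?_⟩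
    · ext x y
      simpa [f.β_eq_zero x.2, f.β_eq_zero y.2] using
        congr($(f.restrict_symmExtension_left hagree) x y)
    · ext x y
      simpa [f.α_eq_zero x.2, f.α_eq_zero y.2] using
        congr($(f.restrict_symmExtension_right hagree) x y)

end Extension

end HyperplanePairFrame

theorem isSymmExtension_iff {n : ℕ} {FU FW : Submodule ℝ (Fin (n + 1) → ℝ)}
    {φU : LinearMap.BilinForm ℝ FU} {φW : LinearMap.BilinForm ℝ FW}
    {φ : LinearMap.BilinForm ℝ (Fin (n + 1) → ℝ)} :
    IsSymmExtension n FU FW φU φW φ ↔ φ.IsSymm ∧ φ.restrict FU = φU ∧ φ.restrict FW = φW := by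
  simp only [IsSymmExtension, LinearMap.BilinForm.isSymm_def, LinearMap.ext_iff,
    LinearMap.BilinForm.restrict_apply, LinearMap.domRestrict_apply]

theorem stmt14_general (n : ℕ) (FU FW : Submodule ℝ (Fin (n + 1) → ℝ))
    (hFU : Module.finrank ℝ FU = n) (hFW : Module.finrank ℝ FW = n)
    (hne : FU ≠ FW)
    (φU : LinearMap.BilinForm ℝ FU) (φW : LinearMap.BilinForm ℝ FW)
    (hU : ∀ x y, φU x y = φU y x) (hW : ∀ x y, φW x y = φW y x)
    (hagree : ∀ (x y : Fin (n + 1) → ℝ) (hx : x ∈ FU ⊓ FW) (hy : y ∈ FU ⊓ FW),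
      φU ⟨x, hx.1⟩ ⟨y, hy.1⟩ = φW ⟨x, hx.2⟩ ⟨y, hy.2⟩) :
    (∃ φ₀ δ : LinearMap.BilinForm ℝ (Fin (n + 1) → ℝ),
      (∀ t : ℝ, IsSymmExtension n FU FW φU φW (φ₀ + t • δ)) ∧
      (∀ φ, IsSymmExtension n FU FW φU φW φ → ∃ t : ℝ, φ = φ₀ + t • δ)) ∧
    ((∃ (x y : Fin (n + 1) → ℝ) (hx : x ∈ FU ⊓ FW) (hy : y ∈ FU ⊓ FW),
        φU ⟨x, hx.1⟩ ⟨y, hy.1⟩ ≠ 0) →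
      ∀ φ₀ δ φ₀' δ' : LinearMap.BilinForm ℝ (Fin (n + 1) → ℝ),
        ((∀ t : ℝ, IsSymmExtension n FU FW φU φW (φ₀ + t • δ)) ∧
          (∀ φ, IsSymmExtension n FU FW φU φW φ → ∃ t : ℝ, φ = φ₀ + t • δ)) →
        ((∀ t : ℝ, IsSymmExtension n FU FW φU φW (φ₀' + t • δ')) ∧
          (∀ φ, IsSymmExtension n FU FW φU φW φ → ∃ t : ℝ, φ = φ₀' + t • δ')) →
        Submodule.span ℝ {φ₀, δ} = Submodule.span ℝ {φ₀', δ'}) := by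
  have hdim : ∀ F : Submodule ℝ (Fin (n + 1) → ℝ), finrank ℝ F = n →
      finrank ℝ F + 1 = finrank ℝ (Fin (n + 1) → ℝ) := fun F hF => by
    rw [hF, finrank_fin_fun]
  obtain ⟨f⟩ := HyperplanePairFrame.nonempty (hdim FU hFU) (hdim FW hFW) hne
  have hpencil : ∀ φ, IsSymmExtension n FU FW φU φW φ ↔
      ∃ t : ℝ, φ = f.symmExtension φU φW + t • f.crossForm := fun φ => by
    rw [isSymmExtension_iff]
    exact f.isSymm_and_restrict_iff (fun x y => hagree x y x.2 y.2) ⟨hU⟩ ⟨hW⟩ φ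
  have hline : ∀ t : ℝ, IsSymmExtension n FU FW φU φW (f.symmExtension φU φW + t • f.crossForm) :=
    fun t => (hpencil _).mpr ⟨t, rfl⟩
  refine ⟨⟨_, _, hline, fun φ => (hpencil φ).mp⟩, ?_⟩
  have hspan : ∀ φ₀ δ : LinearMap.BilinForm ℝ (Fin (n + 1) → ℝ),
      (∀ φ, IsSymmExtension n FU FW φU φW φ → ∃ t : ℝ, φ = φ₀ + t • δ) →
        span ℝ {φ₀, δ} = span ℝ {f.symmExtension φU φW, f.crossForm} := fun φ₀ δ hP =>
    span_pair_eq_of_forall_exists_add_smul (V := LinearMap.BilinForm ℝ _) f.crossForm_ne_zero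
      fun t => hP _ (hline t)
  rintro - φ₀ δ φ₀' δ' ⟨-, hP⟩ ⟨-, hP'⟩
  rw [hspan φ₀ δ hP, hspan φ₀' δ' hP']

/-- Given symmetric bilinear forms `φU`, `φW` on two distinct hyperplanes
`FU`, `FW` of `ℝⁿ⁺¹` that agree on `F = FU ∩ FW`, there exists a symmetric
bilinear form on `ℝⁿ⁺¹` extending both; the extensions form a one-parameter
family (a pencil), and if `φU` does not vanish identically on `F` then this
pencil is uniquely determined. -/
theorem stmt14 (n : ℕ) (FU FW : Submodule ℝ (Fin (n + 1) → ℝ))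
    (hFU : Module.finrank ℝ FU = n) (hFW : Module.finrank ℝ FW = n)
    (hne : FU ≠ FW)
    (hF : Module.finrank ℝ ↥(FU ⊓ FW) = n - 1)
    (φU : LinearMap.BilinForm ℝ FU) (φW : LinearMap.BilinForm ℝ FW)
    (hU : ∀ x y, φU x y = φU y x) (hW : ∀ x y, φW x y = φW y x)
    (hagree : ∀ (x y : Fin (n + 1) → ℝ) (hx : x ∈ FU ⊓ FW) (hy : y ∈ FU ⊓ FW),
      φU ⟨x, hx.1⟩ ⟨y, hy.1⟩ = φW ⟨x, hx.2⟩ ⟨y, hy.2⟩) :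
    (∃ φ₀ δ : LinearMap.BilinForm ℝ (Fin (n + 1) → ℝ),
      (∀ t : ℝ, IsSymmExtension n FU FW φU φW (φ₀ + t • δ)) ∧
      (∀ φ, IsSymmExtension n FU FW φU φW φ → ∃ t : ℝ, φ = φ₀ + t • δ)) ∧
    ((∃ (x y : Fin (n + 1) → ℝ) (hx : x ∈ FU ⊓ FW) (hy : y ∈ FU ⊓ FW),
        φU ⟨x, hx.1⟩ ⟨y, hy.1⟩ ≠ 0) →
      ∀ φ₀ δ φ₀' δ' : LinearMap.BilinForm ℝ (Fin (n + 1) → ℝ),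
        ((∀ t : ℝ, IsSymmExtension n FU FW φU φW (φ₀ + t • δ)) ∧
          (∀ φ, IsSymmExtension n FU FW φU φW φ → ∃ t : ℝ, φ = φ₀ + t • δ)) →
        ((∀ t : ℝ, IsSymmExtension n FU FW φU φW (φ₀' + t • δ')) ∧
          (∀ φ, IsSymmExtension n FU FW φU φW φ → ∃ t : ℝ, φ = φ₀' + t • δ')) →
        Submodule.span ℝ {φ₀, δ} = Submodule.span ℝ {φ₀', δ'}) :=
  stmt14_general n FU FW hFU hFW hne φU φW hU hW hagree
end
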